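/- arXiv:1711.01536 — 4 statements merged into one kernel-verified Lean document; each statement's English description precedes it below -/
import Mathlib

section
/- For every natural number n, ∫_0^4 x^n · (1/(2π)) · √((4-x)/x) dx = C_n, the n-th Catalan number. -/
/-!
Substituting `x = 4 sin² θ` turns the `n`-th moment into
`(4 ^ (n + 1) / π) ∫₀^{π/2} sin^{2n} θ cos² θ dθ`. Writing `cos² = 1 - sin²`, the Wallis recursion
`∫ sin^{2n+2} = (2n+1)/(2n+2) ∫ sin^{2n}` evaluates this to `π C_n / 4 ^ (n + 1)`.
-/

open Real MeasureTheory Set intervalIntegral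

theorem hasDerivAt_const_mul_sin_sq (c θ : ℝ) :
    HasDerivAt (fun θ => c * sin θ ^ 2) (2 * c * sin θ * cos θ) θ :=
  (((hasDerivAt_sin θ).pow 2).const_mul c).congr_deriv (by ring)

theorem sin_pos_of_mem_Ioc_zero_pi_div_two {θ : ℝ} (hθ : θ ∈ Ioc 0 (π / 2)) : 0 < sin θ :=
  sin_pos_of_pos_of_lt_pi hθ.1 (hθ.2.trans_lt (by linarith [pi_pos]))

theorem cos_nonneg_of_mem_Ioc_zero_pi_div_two {θ : ℝ} (hθ : θ ∈ Ioc 0 (π / 2)) : 0 ≤ cos θ :=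
  cos_nonneg_of_mem_Icc ⟨by linarith [hθ.1, pi_pos], hθ.2⟩

theorem strictMonoOn_const_mul_sin_sq {c : ℝ} (hc : 0 < c) :
    StrictMonoOn (fun θ => c * sin θ ^ 2) (Icc 0 (π / 2)) := by
  intro a ha b hb hab
  have hsin : sin a < sin b :=
    strictMonoOn_sin ⟨by linarith [ha.1, pi_pos], ha.2⟩ ⟨by linarith [hb.1, pi_pos], hb.2⟩ hab
  have ha0 : 0 ≤ sin a := sin_nonneg_of_nonneg_of_le_pi ha.1 (ha.2.trans (by linarith [pi_pos]))
  dsimp only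
  gcongr

theorem image_const_mul_sin_sq_Ioc {c : ℝ} (hc : 0 < c) :
    (fun θ => c * sin θ ^ 2) '' Ioc 0 (π / 2) = Ioc 0 c := by
  ext x
  constructor
  · rintro ⟨θ, hθ, rfl⟩
    have := sin_pos_of_mem_Ioc_zero_pi_div_two hθ
    exact ⟨by positivity, mul_le_of_le_one_right hc.le (pow_le_one₀ this.le (sin_le_one θ))⟩
  · rintro ⟨hx0, hxc⟩
    have hy0 : 0 < √(x / c) := sqrt_pos.2 (div_pos hx0 hc)
    have hy1 : √(x / c) ≤ 1 := sqrt_le_one.2 ((div_le_one hc).2 hxc)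
    refine ⟨arcsin √(x / c), ⟨arcsin_pos.2 hy0, arcsin_le_pi_div_two _⟩, ?_⟩
    dsimp only
    rw [sin_arcsin (by linarith) hy1, sq_sqrt (div_pos hx0 hc).le]
    field_simp

/-- Being the change of variables for an injective map, this needs no integrability of `g`, which
matters because the Catalan density is singular at `0`. -/
theorem integral_eq_integral_const_mul_sin_sq {E : Type*} [NormedAddCommGroup E]
    [NormedSpace ℝ E] {c : ℝ} (hc : 0 < c) (g : ℝ → E) :
    ∫ x in 0..c, g x = ∫ θ in 0..π / 2, (2 * c * sin θ * cos θ) • g (c * sin θ ^ 2) := by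
  rw [integral_of_le hc.le, integral_of_le (by positivity), ← image_const_mul_sin_sq_Ioc hc,
    integral_image_eq_integral_abs_deriv_smul measurableSet_Ioc
      (fun θ _ => (hasDerivAt_const_mul_sin_sq c θ).hasDerivWithinAt)
      ((strictMonoOn_const_mul_sin_sq hc).injOn.mono Ioc_subset_Icc_self)]
  refine setIntegral_congr_fun measurableSet_Ioc fun θ hθ => ?_
  have := sin_pos_of_mem_Ioc_zero_pi_div_two hθ
  have := cos_nonneg_of_mem_Ioc_zero_pi_div_two hθ
  rw [abs_of_nonneg (by positivity)]

theorem integral_sin_pow_add_two_zero_pi_div_two (k : ℕ) :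
    ∫ θ in (0:ℝ)..π / 2, sin θ ^ (k + 2) = (k + 1) / (k + 2) * ∫ θ in (0:ℝ)..π / 2, sin θ ^ k := by
  simp [integral_sin_pow]

theorem integral_sin_pow_two_mul_zero_pi_div_two (n : ℕ) :
    ∫ θ in (0:ℝ)..π / 2, sin θ ^ (2 * n) = π / 2 * n.centralBinom / 4 ^ n := by
  induction n with
  | zero => simp
  | succ n ih =>
    have hcb : ((n + 1 : ℕ) : ℝ) * (n + 1).centralBinom = 2 * (2 * n + 1) * n.centralBinom := by
      exact_mod_cast Nat.succ_mul_centralBinom_succ n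
    rw [Nat.mul_succ, integral_sin_pow_add_two_zero_pi_div_two, ih]
    push_cast at hcb ⊢
    field_simp
    linear_combination (-2 * 4 ^ n) * hcb

theorem integral_sin_pow_two_mul_mul_cos_sq_zero_pi_div_two (n : ℕ) :
    ∫ θ in (0:ℝ)..π / 2, sin θ ^ (2 * n) * cos θ ^ 2 = π * catalan n / 4 ^ (n + 1) := by
  have hcat : ((n : ℝ) + 1) * catalan n = n.centralBinom := by
    exact_mod_cast succ_mul_catalan_eq_centralBinom n
  have hsplit : ∀ θ, sin θ ^ (2 * n) * cos θ ^ 2 = sin θ ^ (2 * n) - sin θ ^ (2 * n + 2) := by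
    intro θ; rw [cos_sq', pow_add]; ring
  simp_rw [hsplit]
  rw [intervalIntegral.integral_sub (by apply Continuous.intervalIntegrable; fun_prop)
      (by apply Continuous.intervalIntegrable; fun_prop),
    integral_sin_pow_add_two_zero_pi_div_two, integral_sin_pow_two_mul_zero_pi_div_two]
  push_cast
  field_simp
  linear_combination (-4 * 4 ^ n) * hcat

theorem catalan_density_moment_integrand_sin_sq (n : ℕ) {θ : ℝ} (hθ : θ ∈ Ioc 0 (π / 2)) :
    (2 * 4 * sin θ * cos θ) •
        ((4 * sin θ ^ 2) ^ n * (1 / (2 * π)) * √((4 - 4 * sin θ ^ 2) / (4 * sin θ ^ 2))) =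
      4 ^ (n + 1) / π * (sin θ ^ (2 * n) * cos θ ^ 2) := by
  have hsin := sin_pos_of_mem_Ioc_zero_pi_div_two hθ
  have hsqrt : √((4 - 4 * sin θ ^ 2) / (4 * sin θ ^ 2)) = cos θ / sin θ := by
    rw [← sqrt_sq (div_nonneg (cos_nonneg_of_mem_Ioc_zero_pi_div_two hθ) hsin.le), div_pow,
      cos_sq']
    field_simp
  rw [hsqrt, smul_eq_mul]
  field_simp
  ring

theorem catalan_density_moments (n : ℕ) :
    ∫ x in (0:ℝ)..4, x ^ n * (1 / (2 * π)) * Real.sqrt ((4 - x) / x) = catalan n := by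
  calc ∫ x in (0:ℝ)..4, x ^ n * (1 / (2 * π)) * √((4 - x) / x)
      = ∫ θ in 0..π / 2, (2 * 4 * sin θ * cos θ) •
          ((4 * sin θ ^ 2) ^ n * (1 / (2 * π)) * √((4 - 4 * sin θ ^ 2) / (4 * sin θ ^ 2))) :=
        integral_eq_integral_const_mul_sin_sq (by norm_num) _
    _ = ∫ θ in 0..π / 2, 4 ^ (n + 1) / π * (sin θ ^ (2 * n) * cos θ ^ 2) := by
        refine integral_congr_ae (ae_of_all _ fun θ hθ => ?_)
        rw [uIoc_of_le (by positivity)] at hθ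
        exact catalan_density_moment_integrand_sin_sq n hθ
    _ = catalan n := by
        rw [intervalIntegral.integral_const_mul,
          integral_sin_pow_two_mul_mul_cos_sq_zero_pi_div_two]
        field_simp
end

section
/- The function f_C(x) = (1/(2π))√((4-x)/x) on (0,4) is a probability density: ∫_0^4 (1/(2π))√((4-x)/x) dx = 1. -/
/-!
On `(0, a)` the function `√(x (a - x)) + (a / 2) arcsin (2x / a - 1)`, continuous on `[0, a]`, is
an antiderivative of `√((a - x) / x)`. The integrand is nonnegative, so its integrability near the
singularity at `0` is automatic, and the fundamental theorem of calculus gives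
`∫₀^a √((a - x) / x) dx = (a / 2) (arcsin 1 - arcsin (-1)) = π a / 2`; for `a = 4` this is `2π`.
-/

open Real Set intervalIntegral

theorem sqrt_one_sub_sq_two_mul_div_sub_one {a x : ℝ} (ha : 0 < a) :
    √(1 - (2 * x / a - 1) ^ 2) = 2 * √(x * (a - x)) / a := by
  rw [show 1 - (2 * x / a - 1) ^ 2 = (2 / a) ^ 2 * (x * (a - x)) by field_simp; ring,
    sqrt_mul (by positivity), sqrt_sq (by positivity)]
  ring

theorem sqrt_sub_div_eq_div_sqrt_mul {a x : ℝ} (hx : 0 < x) (hxa : x < a) :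
    √((a - x) / x) = (a - x) / √(x * (a - x)) := by
  rw [sqrt_div (sub_pos.2 hxa).le, sqrt_mul hx.le, div_mul_eq_div_div_swap, div_sqrt]

theorem hasDerivAt_sqrt_mul_sub_add_arcsin {a x : ℝ} (hx : 0 < x) (hxa : x < a) :
    HasDerivAt (fun x => √(x * (a - x)) + a / 2 * arcsin (2 * x / a - 1))
      √((a - x) / x) x := by
  have ha : 0 < a := hx.trans hxa
  have hsqrt : HasDerivAt (fun x => √(x * (a - x))) ((a - 2 * x) / (2 * √(x * (a - x)))) x := by
    have hpoly : HasDerivAt (fun x => x * (a - x)) (a - 2 * x) x :=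
      ((hasDerivAt_id' x).mul ((hasDerivAt_id' x).const_sub a)).congr_deriv (by ring)
    exact hpoly.sqrt (mul_pos hx (sub_pos.2 hxa)).ne'
  have harcsin : HasDerivAt (fun x => arcsin (2 * x / a - 1)) (1 / √(x * (a - x))) x := by
    have hlin : HasDerivAt (fun x => 2 * x / a - 1) (2 / a) x := by
      simpa using (((hasDerivAt_id x).const_mul 2).div_const a).sub_const 1
    have hne_neg_one : 2 * x / a - 1 ≠ -1 := by
      rw [Ne, sub_eq_neg_self]; positivity
    have hne_one : 2 * x / a - 1 ≠ 1 := by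
      intro h; field_simp at h; linarith
    refine ((hasDerivAt_arcsin hne_neg_one hne_one).comp x hlin).congr_deriv ?_
    rw [sqrt_one_sub_sq_two_mul_div_sub_one ha]
    field_simp
  refine (hsqrt.add (harcsin.const_mul (a / 2))).congr_deriv ?_
  rw [sqrt_sub_div_eq_div_sqrt_mul hx hxa]
  field_simp
  ring

theorem integral_sqrt_sub_div_self {a : ℝ} (ha : 0 < a) :
    ∫ x in 0..a, √((a - x) / x) = π / 2 * a := by
  have hderiv : ∀ x ∈ Ioo 0 a, HasDerivAt
      (fun x => √(x * (a - x)) + a / 2 * arcsin (2 * x / a - 1)) √((a - x) / x) x :=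
    fun x hx => hasDerivAt_sqrt_mul_sub_add_arcsin hx.1 hx.2
  have hcont : ContinuousOn (fun x => √(x * (a - x)) + a / 2 * arcsin (2 * x / a - 1))
      (Icc 0 a) := by
    fun_prop
  have hint : IntervalIntegrable (fun x => √((a - x) / x)) MeasureTheory.volume 0 a :=
    intervalIntegrable_deriv_of_nonneg (by rwa [uIcc_of_le ha.le])
      (by simpa [ha.le] using hderiv) (fun x _ => sqrt_nonneg _)
  have hright : 2 * a / a - 1 = 1 := by field_simp; norm_num
  rw [integral_eq_sub_of_hasDerivAt_of_le ha.le hcont hderiv hint]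
  simp [hright, arcsin_one]
  ring

theorem catalan_density_integral_one :
    ∫ x in (0:ℝ)..4, (1 / (2 * π)) * Real.sqrt ((4 - x) / x) = 1 := by
  rw [integral_const_mul, integral_sqrt_sub_div_self (by norm_num)]
  field_simp
  norm_num
end

section
/- For every positive integer k ≥ 2 and natural number n, the Fuss–Catalan number C_{k,n} = (1/(kn+1))·((k+1)n choose n) is a positive integer, and ((k+1)n choose n) = (kn+1)·C_{k,n}. -/
/-! From `choose (a + n) n * (a + n + 1) = choose (a + n + 1) n * (a + 1)`, the factor `a + 1`
divides `choose (a + n) n` as soon as it is coprime to `a + n + 1`, i.e. to `n`; with `a = k n`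
this holds because `k n + 1 ≡ 1 (mod n)`. -/

namespace Nat

theorem choose_add_mul_succ_eq (a n : ℕ) :
    (a + n).choose n * (a + n + 1) = (a + n + 1).choose n * (a + 1) := by
  rw [choose_mul_succ_eq, Nat.add_right_comm, Nat.add_sub_cancel]

theorem succ_dvd_choose_add_of_coprime {a n : ℕ} (h : Coprime (a + 1) n) :
    a + 1 ∣ (a + n).choose n := by
  have hcop : Coprime (a + 1) (a + n + 1) := by
    rwa [Nat.add_right_comm, coprime_self_add_right]
  refine hcop.dvd_of_dvd_mul_right ?_
  rw [choose_add_mul_succ_eq]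
  exact dvd_mul_left _ _

theorem mul_add_one_dvd_choose_add_one_mul (k n : ℕ) : k * n + 1 ∣ ((k + 1) * n).choose n := by
  rw [add_one_mul]
  exact succ_dvd_choose_add_of_coprime ((coprime_mul_right_add_left 1 n k).2 (coprime_one_left n))

end Nat

theorem fussCatalan_integer_general (k n : ℕ) :
    (k * n + 1) ∣ Nat.choose ((k + 1) * n) n ∧
    0 < Nat.choose ((k + 1) * n) n / (k * n + 1) ∧
    Nat.choose ((k + 1) * n) n = (k * n + 1) * (Nat.choose ((k + 1) * n) n / (k * n + 1)) := by
  have hdvd := Nat.mul_add_one_dvd_choose_add_one_mul k n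
  have hpos : 0 < Nat.choose ((k + 1) * n) n :=
    Nat.choose_pos (Nat.le_mul_of_pos_left n k.succ_pos)
  exact ⟨hdvd, Nat.div_pos (Nat.le_of_dvd hpos hdvd) (k * n).succ_pos,
    (Nat.mul_div_cancel' hdvd).symm⟩

theorem fussCatalan_integer (k n : ℕ) (hk : 2 ≤ k) :
    (k * n + 1) ∣ Nat.choose ((k + 1) * n) n ∧
    0 < Nat.choose ((k + 1) * n) n / (k * n + 1) ∧
    Nat.choose ((k + 1) * n) n = (k * n + 1) * (Nat.choose ((k + 1) * n) n / (k * n + 1)) :=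
  fussCatalan_integer_general k n
end

section
/- Both Hankel determinants of the Catalan sequence equal 1: for every n, det[(C_{i+j})_{0≤i,j≤n}] = 1 and det[(C_{i+j+1})_{0≤i,j≤n}] = 1. -/
/-!
Split a nonnegative `±1` walk of length `2 (i + j + r)` from `0` to `0` after `2 i + r` steps, and
read its second part backwards: counting by the height `h` at the split gives
`C (i + j + r) = ∑ₕ b (2 i + r, h) b (2 j + r, h)`, where `b (n, h)` counts nonnegative walks of
length `n` from `0` to `h`. Only heights `h = 2 k + r` contribute, so for `r ∈ {0, 1}` the Hankel
matrix is `L Lᵀ` with `L i k = b (2 i + r, 2 k + r)`, which is lower unitriangular since a walk of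
length `n` cannot reach height above `n`.
-/

open Finset Matrix

/-- `ballot n h` counts the walks of `n` steps `±1` from height `0` to height `h` that never go
below `0`. -/
def ballot : ℕ → ℕ → ℕ
  | 0, 0 => 1
  | 0, _ + 1 => 0
  | n + 1, 0 => ballot n 1
  | n + 1, h + 1 => ballot n h + ballot n (h + 2)

theorem ballot_eq_zero_of_lt : ∀ {n h : ℕ}, n < h → ballot n h = 0
  | 0, _ + 1, _ => rfl
  | n + 1, h + 1, hlt => by
    rw [ballot, ballot_eq_zero_of_lt (by omega), ballot_eq_zero_of_lt (by omega)]

theorem ballot_self : ∀ n : ℕ, ballot n n = 1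
  | 0 => rfl
  | n + 1 => by rw [ballot, ballot_self n, ballot_eq_zero_of_lt (by omega)]

theorem ballot_eq_zero_of_odd : ∀ {n h : ℕ}, Odd (n + h) → ballot n h = 0
  | 0, 0, hodd => by simp at hodd
  | 0, _ + 1, _ => rfl
  | n + 1, 0, hodd => by
    rw [ballot, ballot_eq_zero_of_odd (by simpa using hodd)]
  | n + 1, h + 1, hodd => by
    have hodd' : Odd (n + h) := by rw [Nat.odd_iff] at hodd ⊢; omega
    rw [ballot, ballot_eq_zero_of_odd hodd',
      ballot_eq_zero_of_odd (by rw [Nat.odd_iff] at hodd' ⊢; omega)]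

-- The reflection principle, stated without subtraction.
theorem ballot_add_choose : ∀ h k : ℕ,
    ballot (h + 2 * k) h + (h + 2 * k).choose (h + k + 1) = (h + 2 * k).choose k
  | 0, 0 => rfl
  | 0, k + 1 => by
    have ih := ballot_add_choose 1 k
    have hstep : ballot (2 * k + 1 + 1) 0 = ballot (2 * k + 1) 1 := by rw [ballot]
    have p₁ := Nat.choose_succ_succ' (2 * k + 1) k
    have p₂ := Nat.choose_succ_succ' (2 * k + 1) (k + 1)
    ring_nf at ih hstep p₁ p₂ ⊢
    omega
  | h + 1, 0 => by simp [ballot_self]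
  | h + 1, k + 1 => by
    have ih₁ := ballot_add_choose h (k + 1)
    have ih₂ := ballot_add_choose (h + 2) k
    have hstep : ballot (h + 2 * (k + 1) + 1) (h + 1) =
        ballot (h + 2 * (k + 1)) h + ballot (h + 2 * (k + 1)) (h + 2) := by rw [ballot]
    have p₁ := Nat.choose_succ_succ' (h + 2 * (k + 1)) k
    have p₂ := Nat.choose_succ_succ' (h + 2 * (k + 1)) (h + k + 2)
    ring_nf at ih₁ ih₂ hstep p₁ p₂ ⊢
    omega
termination_by h k => h + 2 * k

theorem catalan_add_choose_succ (m : ℕ) :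
    catalan m + (2 * m).choose (m + 1) = (2 * m).choose m := by
  have hcat := succ_mul_catalan_eq_centralBinom m
  have hchoose := Nat.choose_succ_right_eq (2 * m) m
  rw [Nat.centralBinom_eq_two_mul_choose] at hcat
  rw [show 2 * m - m = m by omega] at hchoose
  apply Nat.eq_of_mul_eq_mul_left m.succ_pos
  nlinarith

theorem ballot_two_mul_zero (m : ℕ) : ballot (2 * m) 0 = catalan m := by
  have h := ballot_add_choose 0 m
  simp only [zero_add] at h
  have := catalan_add_choose_succ m
  omega

-- The one-step transition `g ↦ (h ↦ g (h - 1) + g (h + 1))` on `ℕ` is symmetric.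
theorem sum_range_ballot_mul_ballot_succ {m l N : ℕ} (hm : m + 2 ≤ N) (hl : l + 2 ≤ N) :
    ∑ h ∈ range N, ballot m h * ballot (l + 1) h =
      ∑ h ∈ range N, ballot (m + 1) h * ballot l h := by
  obtain ⟨N, rfl⟩ : ∃ N', N = N' + 1 := ⟨N - 1, by omega⟩
  simp only [sum_range_succ' _ N, ballot, mul_add, add_mul, sum_add_distrib]
  have hG := sum_range_succ' (fun h => ballot m h * ballot l (h + 1)) N
  have hG' := sum_range_succ (fun h => ballot m h * ballot l (h + 1)) N
  have hD := sum_range_succ' (fun h => ballot m (h + 1) * ballot l h) N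
  have hD' := sum_range_succ (fun h => ballot m (h + 1) * ballot l h) N
  simp only [ballot_eq_zero_of_lt (show m < N by omega), ballot_eq_zero_of_lt (show l < N by omega),
    zero_mul, mul_zero, add_zero] at hG' hD'
  simp only [zero_add, add_assoc, Nat.reduceAdd] at hG hD ⊢
  omega

theorem sum_range_ballot_mul_ballot {m N : ℕ} (l : ℕ) (hN : m < N) :
    ∑ h ∈ range N, ballot m h * ballot l h = ballot (m + l) 0 := by
  have wide : ∀ M l m, m + l + 2 ≤ M →
      ∑ h ∈ range M, ballot m h * ballot l h = ballot (m + l) 0 := by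
    intro M l
    induction l with
    | zero =>
      intro m _
      rw [sum_eq_single_of_mem 0 (mem_range.2 (by omega)) fun h _ hh => ?_]
      · rw [add_zero]
        exact mul_one _
      · obtain ⟨h, rfl⟩ := Nat.exists_eq_succ_of_ne_zero hh
        rw [ballot, mul_zero]
    | succ l ih =>
      intro m hM
      rw [sum_range_ballot_mul_ballot_succ (by omega) (by omega), ih (m + 1) (by omega),
        add_right_comm, add_assoc]
  rw [← wide (N + l + 2) l m (by omega)]
  refine sum_subset (range_subset_range.2 (by omega)) fun h _ hh => ?_
  rw [ballot_eq_zero_of_lt (by simp at hh; omega), zero_mul]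

theorem sum_range_comp_two_mul_add {M : Type*} [AddCommMonoid M] {f : ℕ → M} {r : ℕ}
    (hr : r < 2) (hf : ∀ h, h % 2 ≠ r → f h = 0) (n : ℕ) :
    ∑ k ∈ range n, f (2 * k + r) = ∑ h ∈ range (2 * n), f h := by
  induction n with
  | zero => rfl
  | succ n ih =>
    rw [sum_range_succ, ih, show 2 * (n + 1) = 2 * n + 1 + 1 by ring, sum_range_succ,
      sum_range_succ, add_assoc]
    interval_cases r
    · simp [hf (2 * n + 1) (by omega)]
    · simp [hf (2 * n) (by omega)]

theorem sum_range_ballot_mul_ballot_eq_catalan {n i r : ℕ} (j : ℕ) (hi : i < n) (hr : r < 2) :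
    ∑ k ∈ range n, ballot (2 * i + r) (2 * k + r) * ballot (2 * j + r) (2 * k + r) =
      catalan (i + j + r) := by
  have parity : ∀ h, h % 2 ≠ r → ballot (2 * i + r) h * ballot (2 * j + r) h = 0 := by
    intro h hh
    rw [ballot_eq_zero_of_odd (by rw [Nat.odd_iff]; omega), zero_mul]
  rw [sum_range_comp_two_mul_add (f := fun h => ballot (2 * i + r) h * ballot (2 * j + r) h)
      hr parity, sum_range_ballot_mul_ballot _ (by omega),
    show 2 * i + r + (2 * j + r) = 2 * (i + j + r) by ring, ballot_two_mul_zero]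

theorem Matrix.det_mul_transpose_eq_one {R m : Type*} [CommRing R] [Fintype m] [LinearOrder m]
    {L : Matrix m m R} (hL : L.IsLowerTriangular) (hdiag : ∀ i, L i i = 1) :
    (L * Lᵀ).det = 1 := by
  rw [det_mul, det_transpose, det_of_isLowerTriangular L hL]
  simp [hdiag]

theorem det_catalan_hankel (n : ℕ) {r : ℕ} (hr : r < 2) :
    (of fun i j : Fin n => (catalan (i + j + r) : ℤ)).det = 1 := by
  set L : Matrix (Fin n) (Fin n) ℤ := of fun i k => (ballot (2 * i + r) (2 * k + r) : ℤ)
  have factor : (of fun i j : Fin n => (catalan (i + j + r) : ℤ)) = L * Lᵀ := by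
    ext i j
    simp only [L, mul_apply, transpose_apply, of_apply]
    rw [Fin.sum_univ_eq_sum_range (fun k => (ballot (2 * i + r) (2 * k + r) *
      ballot (2 * j + r) (2 * k + r) : ℤ)), ← sum_range_ballot_mul_ballot_eq_catalan j i.2 hr]
    push_cast
    rfl
  rw [factor]
  refine det_mul_transpose_eq_one (fun i k hik => ?_) fun i => ?_
  · exact Nat.cast_eq_zero.2 (ballot_eq_zero_of_lt (by simp at hik; omega))
  · simp [L, ballot_self]

theorem catalan_hankel_det (n : ℕ) :
    Matrix.det (Matrix.of fun i j : Fin (n + 1) => (catalan ((i : ℕ) + (j : ℕ)) : ℤ)) = 1 ∧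
    Matrix.det (Matrix.of fun i j : Fin (n + 1) => (catalan ((i : ℕ) + (j : ℕ) + 1) : ℤ)) = 1 :=
  ⟨det_catalan_hankel (n + 1) (r := 0) two_pos, det_catalan_hankel (n + 1) one_lt_two⟩
end
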